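/- arXiv:1201.5495 — 11 statements merged into one kernel-verified Lean document; each statement's English description precedes it below -/
import Mathlib

section
/- Let (P, ≤) be an upwards linear partial order, a, c ∈ P and b, d ∈ P ∪ {∞} with a ≤ b and c ≤ d. If the intervals [a, b) and [c, d) are branching free and not disjoint, then a and c are comparable, and b and d are comparable (in P ∪ {∞}). -/
universe u

/-- The interval `[p₁, p₂)`, where the right endpoint may be `∞` (i.e. `⊤` in `WithTop P`). -/
def Ival {P : Type u} [PartialOrder P] (p₁ : P) (p₂ : WithTop P) : Set P :=
  {p : P | p₁ ≤ p ∧ (p : WithTop P) < p₂}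

/-- The interval `[p₁, p₂)` is branching free: for every `p ∈ [p₁, p₂)` and every `x < p`,
the elements `x` and `p₁` are comparable. -/
def BranchingFree {P : Type u} [PartialOrder P] (p₁ : P) (p₂ : WithTop P) : Prop :=
  ∀ p ∈ Ival p₁ p₂, ∀ x : P, x < p → x ≤ p₁ ∨ p₁ ≤ x

/-- A partial order is upwards linear if for every `p` the set `{x | p < x}` is linearly
ordered. -/
def UpwardsLinear (P : Type u) [PartialOrder P] : Prop :=
  ∀ p x y : P, p < x → p < y → x ≤ y ∨ y ≤ x

theorem BranchingFree.comparable_of_le_mem {P : Type u} [PartialOrder P] {a c p : P}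
    {b : WithTop P} (hbf : BranchingFree a b) (hp : p ∈ Ival a b) (hcp : c ≤ p) :
    a ≤ c ∨ c ≤ a := by
  rcases hcp.lt_or_eq with hlt | rfl
  · exact (hbf p hp c hlt).symm
  · exact Or.inl hp.1

theorem UpwardsLinear.withTop_comparable {P : Type u} [PartialOrder P] (hul : UpwardsLinear P)
    {p : P} {b d : WithTop P} (hpb : (p : WithTop P) < b) (hpd : (p : WithTop P) < d) :
    b ≤ d ∨ d ≤ b := by
  induction b with
  | top => exact Or.inr le_top
  | coe b =>
    induction d with
    | top => exact Or.inl le_top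
    | coe d =>
      simpa only [WithTop.coe_le_coe] using
        hul p b d (WithTop.coe_lt_coe.mp hpb) (WithTop.coe_lt_coe.mp hpd)

theorem comparable_of_branchingFree_not_disjoint_general {P : Type u} [PartialOrder P]
    (hul : UpwardsLinear P) (a c : P) (b d : WithTop P)
    (hbf₁ : BranchingFree a b)
    (hnd : (Ival a b ∩ Ival c d).Nonempty) :
    (a ≤ c ∨ c ≤ a) ∧ (b ≤ d ∨ d ≤ b) := by
  obtain ⟨p, hpab, hpcd⟩ := hnd
  exact ⟨hbf₁.comparable_of_le_mem hpab hpcd.1, hul.withTop_comparable hpab.2 hpcd.2⟩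

/-- In an upwards linear partial order, if the branching free intervals `[a, b)` and `[c, d)`
are not disjoint, then `a` and `c` are comparable, and `b` and `d` are comparable. -/
theorem comparable_of_branchingFree_not_disjoint {P : Type u} [PartialOrder P]
    (hul : UpwardsLinear P) (a c : P) (b d : WithTop P)
    (hab : (a : WithTop P) ≤ b) (hcd : (c : WithTop P) ≤ d)
    (hbf₁ : BranchingFree a b) (hbf₂ : BranchingFree c d)
    (hnd : (Ival a b ∩ Ival c d).Nonempty) :
    (a ≤ c ∨ c ≤ a) ∧ (b ≤ d ∨ d ≤ b) :=
  comparable_of_branchingFree_not_disjoint_general hul a c b d hbf₁ hnd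
end

section
/- Let (P, ≤) be an upwards linear partial order, a, c ∈ P and b, d ∈ P ∪ {∞} with a ≤ b and c ≤ d. If the intervals [a, b) and [c, d) are maximal branching free, then they are either disjoint or equal. -/
universe u

/-- `[p₁, p₂)` is a maximal branching free interval: it is branching free and maximal with
respect to set inclusion among the branching free intervals. -/
def MaxBranchingFree {P : Type u} [PartialOrder P] (p₁ : P) (p₂ : WithTop P) : Prop :=
  (p₁ : WithTop P) ≤ p₂ ∧ BranchingFree p₁ p₂ ∧
    ∀ (q₁ : P) (q₂ : WithTop P), (q₁ : WithTop P) ≤ q₂ → BranchingFree q₁ q₂ →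
      Ival p₁ p₂ ⊆ Ival q₁ q₂ → Ival p₁ p₂ = Ival q₁ q₂

/-!
Two maximal branching free intervals `[a, b)` and `[c, d)` sharing a point `p` have comparable
left endpoints (branching freeness at `p`) and comparable right endpoints (upwards linearity
above `p`). Say `a ≤ c`. If `d ≤ b`, then `[c, d) ⊆ [a, b)` and maximality gives equality.
If `b ≤ d`, the interval `[a, d)` is still branching free: a point of it outside `[a, b)` lies
above `p`, hence in `[c, d)`. It contains both intervals, so both equal it.
-/

theorem Ival_subset_Ival {P : Type u} [PartialOrder P] {a c : P} {b d : WithTop P}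
    (hac : a ≤ c) (hdb : d ≤ b) : Ival c d ⊆ Ival a b :=
  fun _ hx => ⟨hac.trans hx.1, hx.2.trans_le hdb⟩

theorem BranchingFree.le_or_le_of_le_of_mem {P : Type u} [PartialOrder P] {a p x : P}
    {b : WithTop P} (h : BranchingFree a b) (hp : p ∈ Ival a b) (hxp : x ≤ p) :
    x ≤ a ∨ a ≤ x := by
  rcases hxp.eq_or_lt with rfl | hxp
  · exact Or.inr hp.1
  · exact h p hp x hxp

namespace UpwardsLinear

variable {P : Type u} [PartialOrder P] (hul : UpwardsLinear P)
include hul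

theorem le_total_of_ge {a x y : P} (hx : a ≤ x) (hy : a ≤ y) : x ≤ y ∨ y ≤ x := by
  rcases hx.eq_or_lt with rfl | hx
  · exact Or.inl hy
  rcases hy.eq_or_lt with rfl | hy
  · exact Or.inr hx.le
  exact hul a x y hx hy

theorem le_total_of_mem_Ival_inter {a c p : P} {b d : WithTop P} (hp₁ : p ∈ Ival a b)
    (hp₂ : p ∈ Ival c d) : b ≤ d ∨ d ≤ b := by
  induction b with
  | top => exact Or.inr le_top
  | coe b =>
    induction d with
    | top => exact Or.inl le_top
    | coe d =>
      simpa only [WithTop.coe_le_coe] using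
        hul p b d (WithTop.coe_lt_coe.mp hp₁.2) (WithTop.coe_lt_coe.mp hp₂.2)

theorem le_of_mem_Ival_of_not_lt {a p q : P} {b : WithTop P} (hp : p ∈ Ival a b) (haq : a ≤ q)
    (hqb : ¬ (q : WithTop P) < b) : p ≤ q :=
  (hul.le_total_of_ge hp.1 haq).resolve_right
    fun hqp => hqb ((WithTop.coe_le_coe.mpr hqp).trans_lt hp.2)

theorem branchingFree_extend {a c p : P} {b d : WithTop P} (h₁ : BranchingFree a b)
    (h₂ : BranchingFree c d) (hac : a ≤ c) (hp₁ : p ∈ Ival a b) (hp₂ : p ∈ Ival c d) :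
    BranchingFree a d := by
  intro q hq x hxq
  by_cases hqb : (q : WithTop P) < b
  · exact h₁ q ⟨hq.1, hqb⟩ x hxq
  have hpq : p ≤ q := hul.le_of_mem_Ival_of_not_lt hp₁ hq.1 hqb
  rcases h₂ q ⟨hp₂.1.trans hpq, hq.2⟩ x hxq with hxc | hcx
  · exact h₁.le_or_le_of_le_of_mem hp₁ (hxc.trans hp₂.1)
  · exact Or.inr (hac.trans hcx)

theorem Ival_eq_of_maxBranchingFree {a c p : P} {b d : WithTop P} (hm₁ : MaxBranchingFree a b)
    (hm₂ : MaxBranchingFree c d) (hac : a ≤ c) (hp₁ : p ∈ Ival a b) (hp₂ : p ∈ Ival c d) :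
    Ival a b = Ival c d := by
  rcases hul.le_total_of_mem_Ival_inter hp₁ hp₂ with hbd | hdb
  · have had : (a : WithTop P) ≤ d := hm₁.1.trans hbd
    have hBF := hul.branchingFree_extend hm₁.2.1 hm₂.2.1 hac hp₁ hp₂
    rw [hm₁.2.2 a d had hBF (Ival_subset_Ival le_rfl hbd),
      hm₂.2.2 a d had hBF (Ival_subset_Ival hac le_rfl)]
  · exact (hm₂.2.2 a b hm₁.1 hm₁.2.1 (Ival_subset_Ival hac hdb)).symm

end UpwardsLinear

theorem maxBranchingFree_disjoint_or_eq_general {P : Type u} [PartialOrder P]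
    (hul : UpwardsLinear P) (a c : P) (b d : WithTop P)
    (hm₁ : MaxBranchingFree a b) (hm₂ : MaxBranchingFree c d) :
    Ival a b ∩ Ival c d = ∅ ∨ Ival a b = Ival c d := by
  rcases (Ival a b ∩ Ival c d).eq_empty_or_nonempty with h | ⟨p, hp₁, hp₂⟩
  · exact Or.inl h
  right
  rcases hm₁.2.1.le_or_le_of_le_of_mem hp₁ hp₂.1 with hca | hac
  · exact (hul.Ival_eq_of_maxBranchingFree hm₂ hm₁ hca hp₂ hp₁).symm
  · exact hul.Ival_eq_of_maxBranchingFree hm₁ hm₂ hac hp₁ hp₂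

/-- In an upwards linear partial order, two maximal branching free intervals `[a, b)` and
`[c, d)` are either disjoint or equal. -/
theorem maxBranchingFree_disjoint_or_eq {P : Type u} [PartialOrder P]
    (hul : UpwardsLinear P) (a c : P) (b d : WithTop P)
    (hab : (a : WithTop P) ≤ b) (hcd : (c : WithTop P) ≤ d)
    (hm₁ : MaxBranchingFree a b) (hm₂ : MaxBranchingFree c d) :
    Ival a b ∩ Ival c d = ∅ ∨ Ival a b = Ival c d :=
  maxBranchingFree_disjoint_or_eq_general hul a c b d hm₁ hm₂
end

section
/- Let P be a wulpo (well-founded upwards linear partial order). Then every element p ∈ P is contained in a maximal branching free interval, and this interval is unique: any two maximal branching free intervals containing p coincide. -/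
variable {P : Type u} [PartialOrder P]

theorem UpwardsLinear.total_of_le_of_le (hul : UpwardsLinear P) {a x y : P}
    (hx : a ≤ x) (hy : a ≤ y) : x ≤ y ∨ y ≤ x := by
  rcases hx.eq_or_lt with rfl | hx
  · exact Or.inl hy
  rcases hy.eq_or_lt with rfl | hy
  · exact Or.inr hx.le
  exact hul a x y hx hy

def branchingFreeSet (a : P) : Set P :=
  {q | a ≤ q ∧ ∀ x, x < q → x ≤ a ∨ a ≤ x}

theorem self_mem_branchingFreeSet (a : P) : a ∈ branchingFreeSet a :=
  ⟨le_rfl, fun _ hx => Or.inl hx.le⟩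

theorem branchingFree_iff_ival_subset {a : P} {b : WithTop P} :
    BranchingFree a b ↔ Ival a b ⊆ branchingFreeSet a :=
  ⟨fun h q hq => ⟨hq.1, h q hq⟩, fun h _ hq => (h hq).2⟩

theorem mem_branchingFreeSet_of_le {a q r : P} (hq : q ∈ branchingFreeSet a)
    (har : a ≤ r) (hrq : r ≤ q) : r ∈ branchingFreeSet a :=
  ⟨har, fun x hx => hq.2 x (hx.trans_le hrq)⟩

theorem exists_ival_eq_branchingFreeSet [WellFoundedLT P] (hul : UpwardsLinear P) (a : P) :
    ∃ b : WithTop P, Ival a b = branchingFreeSet a := by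
  by_cases hall : ∀ q, a ≤ q → q ∈ branchingFreeSet a
  · exact ⟨⊤, Set.ext fun q => ⟨fun hq => hall q hq.1, fun hq => ⟨hq.1, WithTop.coe_lt_top q⟩⟩⟩
  push Not at hall
  obtain ⟨q₀, ⟨haq₀, hq₀⟩, hmin⟩ :=
    wellFounded_lt.has_min {q | a ≤ q ∧ q ∉ branchingFreeSet a} hall
  refine ⟨q₀, Set.ext fun q => ⟨fun ⟨haq, hqq₀⟩ => ?_, fun hq => ⟨hq.1, ?_⟩⟩⟩
  · by_contra hq
    exact hmin q ⟨haq, hq⟩ (WithTop.coe_lt_coe.1 hqq₀)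
  · rcases hul.total_of_le_of_le hq.1 haq₀ with hqq₀ | hq₀q
    · exact WithTop.coe_lt_coe.2 (hqq₀.lt_of_ne (by rintro rfl; exact hq₀ hq))
    · exact absurd (mem_branchingFreeSet_of_le hq haq₀ hq₀q) hq₀

theorem exists_isLeast_mem_branchingFreeSet [WellFoundedLT P] (p : P) :
    ∃ a₀, IsLeast {a | p ∈ branchingFreeSet a} a₀ := by
  obtain ⟨a₀, ha₀, hmin⟩ :=
    wellFounded_lt.has_min {a | p ∈ branchingFreeSet a} ⟨p, self_mem_branchingFreeSet p⟩
  refine ⟨a₀, ha₀, fun a ha => ?_⟩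
  rcases ha.1.eq_or_lt with rfl | hap
  · exact ha₀.1
  rcases ha₀.2 a hap with haa₀ | ha₀a
  · exact (haa₀.eq_or_lt.resolve_right (hmin a ha)).ge
  · exact ha₀a

theorem branchingFreeSet_subset {p a₀ a : P} (ha₀ : p ∈ branchingFreeSet a₀)
    (ha₀a : a₀ ≤ a) (hap : a ≤ p) : branchingFreeSet a ⊆ branchingFreeSet a₀ := by
  refine fun q hq => ⟨ha₀a.trans hq.1, fun x hxq => ?_⟩
  rcases hq.2 x hxq with hxa | hax
  · rcases (hxa.trans hap).eq_or_lt with rfl | hxp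
    · exact Or.inr ha₀.1
    · exact ha₀.2 x hxp
  · exact Or.inr (ha₀a.trans hax)

/-- In a wulpo (well-founded upwards linear partial order), every element is contained in a
maximal branching free interval, and any two maximal branching free intervals containing it
coincide. -/
theorem mem_unique_maxBranchingFree {P : Type u} [PartialOrder P] [WellFoundedLT P]
    (hul : UpwardsLinear P) (p : P) :
    (∃ (p₁ : P) (p₂ : WithTop P), MaxBranchingFree p₁ p₂ ∧ p ∈ Ival p₁ p₂) ∧
    (∀ (a c : P) (b d : WithTop P), MaxBranchingFree a b → MaxBranchingFree c d →
      p ∈ Ival a b → p ∈ Ival c d → Ival a b = Ival c d) := by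
  obtain ⟨a₀, ha₀, hleast⟩ := exists_isLeast_mem_branchingFreeSet p
  obtain ⟨b₀, hb₀⟩ := exists_ival_eq_branchingFreeSet hul a₀
  have hp₀ : p ∈ Ival a₀ b₀ := hb₀ ▸ ha₀
  have hbf₀ : BranchingFree a₀ b₀ := branchingFree_iff_ival_subset.2 hb₀.le
  have ha₀b₀ : (a₀ : WithTop P) ≤ b₀ := (hb₀.ge (self_mem_branchingFreeSet a₀)).2.le
  have hcontains : ∀ a b, BranchingFree a b → p ∈ Ival a b → Ival a b ⊆ Ival a₀ b₀ := by
    intro a b hab hp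
    have ha : p ∈ branchingFreeSet a := branchingFree_iff_ival_subset.1 hab hp
    rw [hb₀]
    exact (branchingFree_iff_ival_subset.1 hab).trans
      (branchingFreeSet_subset ha₀ (hleast ha) hp.1)
  have heq : ∀ a b, MaxBranchingFree a b → p ∈ Ival a b → Ival a b = Ival a₀ b₀ :=
    fun a b hab hp => hab.2.2 a₀ b₀ ha₀b₀ hbf₀ (hcontains a b hab.2.1 hp)
  refine ⟨⟨a₀, b₀, ⟨ha₀b₀, hbf₀, fun q₁ q₂ _ hq hsub => ?_⟩, hp₀⟩, ?_⟩
  · exact hsub.antisymm (hcontains q₁ q₂ hq (hsub hp₀))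
  · intro a c b d hab hcd hpa hpc
    rw [heq a b hab hpa, heq c d hcd hpc]
end

section
/- Let P be a wulpo (well-founded upwards linear partial order) and let I ≠ J be two distinct maximal branching free intervals of P. For all p₁ ∈ I and p₂ ∈ J with p₁ < p₂, there exists p ∈ P such that p < p₂ and p is incomparable to p₁. -/
/-!
If every element below `p₂` were comparable with `p₁`, then every element `x ≤ p₂` would also
be comparable with the smaller of the two left endpoints. Upwards linearity then lets the interval
with the larger left endpoint be extended down to the smaller one while staying branching free.
Since the right endpoints are comparable (both lie above `p₁`), one of the two intervals, possibly
after this extension, contains the other, and maximality forces the intervals to coincide.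
-/

universe u

section

variable {P : Type u} [PartialOrder P]

lemma Ival_subset_Ival_s4 {p₁ q₁ : P} {p₂ q₂ : WithTop P} (h₁ : q₁ ≤ p₁) (h₂ : p₂ ≤ q₂) :
    Ival p₁ p₂ ⊆ Ival q₁ q₂ :=
  fun _ hp => ⟨h₁.trans hp.1, hp.2.trans_le h₂⟩

lemma UpwardsLinear.withTop_le_total (hul : UpwardsLinear P) {p : P} {b d : WithTop P}
    (hb : (p : WithTop P) < b) (hd : (p : WithTop P) < d) : b ≤ d ∨ d ≤ b := by
  induction b with
  | top => exact Or.inr le_top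
  | coe b =>
    induction d with
    | top => exact Or.inl le_top
    | coe d => simpa using hul p b d (by simpa using hb) (by simpa using hd)

namespace BranchingFree

variable {a c x p q : P} {b d : WithTop P}

lemma le_or_le_of_le (hI : BranchingFree a b) (hp : p ∈ Ival a b) (hxp : x ≤ p) :
    x ≤ a ∨ a ≤ x := by
  rcases hxp.lt_or_eq with hxp | rfl
  · exact hI p hp x hxp
  · exact Or.inr hp.1

lemma le_or_le_of_forall_lt_le_or_le (hI : BranchingFree a b) (hp : p ∈ Ival a b) (hpq : p ≤ q)
    (H : ∀ x < q, x ≤ p ∨ p ≤ x) : ∀ x ≤ q, x ≤ a ∨ a ≤ x := by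
  intro x hxq
  rcases hxq.lt_or_eq with hxq | rfl
  · rcases H x hxq with hxp | hpx
    · exact hI.le_or_le_of_le hp hxp
    · exact Or.inr (hp.1.trans hpx)
  · exact Or.inr (hp.1.trans hpq)

lemma extend_left (hul : UpwardsLinear P) (hJ : BranchingFree c d) (hac : a ≤ c) (hcq : c ≤ q)
    (haq : a < q) (hq : ∀ x ≤ q, x ≤ a ∨ a ≤ x) : BranchingFree a d := by
  rintro p ⟨hap, hpd⟩ x hxp
  rcases hap.eq_or_lt with rfl | hap
  · exact Or.inl hxp.le
  -- `p` and `q` both lie above `a`, so either `p ≤ q` or `p` lies in `[c, d)`.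
  rcases hul a p q hap haq with hpq | hqp
  · exact hq x (hxp.le.trans hpq)
  · rcases hJ p ⟨hcq.trans hqp, hpd⟩ x hxp with hxc | hcx
    · exact hq x (hxc.trans hcq)
    · exact Or.inr (hac.trans hcx)

end BranchingFree

lemma MaxBranchingFree.Ival_eq_of_le (hul : UpwardsLinear P) {a c q : P} {b d : WithTop P}
    (hI : MaxBranchingFree a b) (hJ : MaxBranchingFree c d) (hac : a ≤ c) (hcq : c ≤ q)
    (haq : a < q) (hq : ∀ x ≤ q, x ≤ a ∨ a ≤ x) (hbd : b ≤ d ∨ d ≤ b) :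
    Ival a b = Ival c d := by
  rcases hbd with hbd | hdb
  · have hK : BranchingFree a d := hJ.2.1.extend_left hul hac hcq haq hq
    have had : (a : WithTop P) ≤ d := hI.1.trans hbd
    exact (hI.2.2 a d had hK (Ival_subset_Ival_s4 le_rfl hbd)).trans
      (hJ.2.2 a d had hK (Ival_subset_Ival_s4 hac le_rfl)).symm
  · exact (hJ.2.2 a b hI.1 hI.2.1 (Ival_subset_Ival_s4 hac hdb)).symm

end

theorem separation_of_maxBranchingFree_general {P : Type u} [PartialOrder P]
    (hul : UpwardsLinear P)
    (a c : P) (b d : WithTop P) (hI : MaxBranchingFree a b) (hJ : MaxBranchingFree c d)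
    (hne : Ival a b ≠ Ival c d) (p₁ p₂ : P) (hp₁ : p₁ ∈ Ival a b) (hp₂ : p₂ ∈ Ival c d)
    (hlt : p₁ < p₂) :
    ∃ p : P, p < p₂ ∧ ¬ p ≤ p₁ ∧ ¬ p₁ ≤ p := by
  by_contra! hcon
  have H : ∀ x < p₂, x ≤ p₁ ∨ p₁ ≤ x := fun x hx => or_iff_not_imp_left.2 (hcon x hx)
  have hp₁d : (p₁ : WithTop P) < d := (WithTop.coe_lt_coe.2 hlt).trans hp₂.2
  have hbd : b ≤ d ∨ d ≤ b := hul.withTop_le_total hp₁.2 hp₁d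
  have hac : a ≤ c ∨ c ≤ a := by
    rcases hJ.2.1 p₂ hp₂ p₁ hlt with hp₁c | hcp₁
    · exact Or.inl (hp₁.1.trans hp₁c)
    · exact (hI.2.1.le_or_le_of_le hp₁ hcp₁).symm
  rcases hac with hac | hca
  · exact hne <| hI.Ival_eq_of_le hul hJ hac hp₂.1 (hp₁.1.trans_lt hlt)
      (hI.2.1.le_or_le_of_forall_lt_le_or_le hp₁ hlt.le H) hbd
  · have hp₁J : p₁ ∈ Ival c d := ⟨hca.trans hp₁.1, hp₁d⟩
    exact hne <| (hJ.Ival_eq_of_le hul hI hca (hp₁.1.trans hlt.le) (hp₁J.1.trans_lt hlt)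
      (hJ.2.1.le_or_le_of_forall_lt_le_or_le hp₁J hlt.le H) hbd.symm).symm

/-- In a wulpo, if `[a, b)` and `[c, d)` are two distinct maximal branching free intervals,
`p₁ ∈ [a, b)`, `p₂ ∈ [c, d)` and `p₁ < p₂`, then there is some `p < p₂` incomparable
to `p₁`. -/
theorem separation_of_maxBranchingFree {P : Type u} [PartialOrder P] [WellFoundedLT P]
    (hul : UpwardsLinear P)
    (a c : P) (b d : WithTop P) (hI : MaxBranchingFree a b) (hJ : MaxBranchingFree c d)
    (hne : Ival a b ≠ Ival c d) (p₁ p₂ : P) (hp₁ : p₁ ∈ Ival a b) (hp₂ : p₂ ∈ Ival c d)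
    (hlt : p₁ < p₂) :
    ∃ p : P, p < p₂ ∧ ¬ p ≤ p₁ ∧ ¬ p₁ ≤ p :=
  separation_of_maxBranchingFree_general hul a c b d hI hJ hne p₁ p₂ hp₁ hp₂ hlt
end

section
/- For all ordinals α, β, γ: (α ⊗ β) + (α ⊗ γ) ≤ α ⊗ (β + γ), where + is the usual ordinal sum and ⊗ is the natural (Hessenberg) product of ordinals. -/
namespace Ordinal

universe u

/-- Natural addition on ordinals (old Mathlib `Ordinal.nadd`). -/
noncomputable def nadd (a b : Ordinal.{u}) : Ordinal.{u} :=
  max (⨆ x : Set.Iio a, Order.succ (nadd x.1 b)) (⨆ x : Set.Iio b, Order.succ (nadd a x.1))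
termination_by (a, b)
decreasing_by
  · exact Prod.Lex.left _ _ x.2
  · exact Prod.Lex.right _ x.2

/-- Natural multiplication on ordinals (old Mathlib `Ordinal.nmul`). -/
noncomputable def nmul (a b : Ordinal.{u}) : Ordinal.{u} :=
  sInf {c | ∀ a' < a, ∀ b' < b, nadd (nmul a' b) (nmul a b') < nadd c (nmul a' b')}
termination_by (a, b)

end Ordinal

namespace NaturalOps

scoped infixl:65 " ♯ " => Ordinal.nadd
scoped infixl:70 " ⨳ " => Ordinal.nmul

end NaturalOps

open NaturalOps

/-!
Write `β = ω ^ c * q + r` with `r < ω ^ c`, where `ω ^ c` is the leading power of `γ`. Then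
`β + γ = ω ^ c * q + γ`, and both this sum and `β = ω ^ c * q + r` are natural sums, because `ω ^ c`
is closed under `♯` and the exponents of `ω ^ c * q` are at least those of `γ < ω ^ (c + 1)`.
Distributivity of `⨳` over `♯` turns the claim into
`(α ⨳ (ω ^ c * q) ♯ α ⨳ r) + α ⨳ γ ≤ α ⨳ (ω ^ c * q) ♯ α ⨳ γ`, which holds since
`(x ♯ y) + z ≤ x ♯ (y + z)` and `α ⨳ r` is absorbed by `α ⨳ γ`: every `α ⨳ r * n` is bounded
by `α ⨳ (r ♯ ⋯ ♯ r)`, and `r ♯ ⋯ ♯ r < ω ^ c ≤ γ`.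
-/

open Order

namespace Ordinal

theorem nadd_lt_nadd_left {b c : Ordinal} (h : b < c) (a : Ordinal) : a ♯ b < a ♯ c := by
  conv_rhs => rw [nadd]
  exact (lt_succ _).trans_le ((Ordinal.le_iSup (fun x : Set.Iio c => succ (a ♯ x.1)) ⟨b, h⟩).trans
    (le_max_right _ _))

theorem nadd_lt_nadd_right {b c : Ordinal} (h : b < c) (a : Ordinal) : b ♯ a < c ♯ a := by
  conv_rhs => rw [nadd]
  exact (lt_succ _).trans_le ((Ordinal.le_iSup (fun x : Set.Iio c => succ (x.1 ♯ a)) ⟨b, h⟩).trans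
    (le_max_left _ _))

theorem nadd_le_nadd_left {b c : Ordinal} (h : b ≤ c) (a : Ordinal) : a ♯ b ≤ a ♯ c :=
  StrictMono.monotone (fun _ _ h => nadd_lt_nadd_left h a) h

theorem nadd_le_nadd_right {b c : Ordinal} (h : b ≤ c) (a : Ordinal) : b ♯ a ≤ c ♯ a :=
  StrictMono.monotone (fun _ _ h => nadd_lt_nadd_right h a) h

theorem nadd_lt_nadd_iff_right (a : Ordinal) {b c : Ordinal} : b ♯ a < c ♯ a ↔ b < c :=
  StrictMono.lt_iff_lt fun _ _ h => nadd_lt_nadd_right h a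

theorem nadd_lt_nadd_of_lt_of_le {a b c d : Ordinal} (h₁ : a < b) (h₂ : c ≤ d) :
    a ♯ c < b ♯ d :=
  (nadd_lt_nadd_right h₁ c).trans_le (nadd_le_nadd_left h₂ b)

theorem nadd_lt_nadd_of_le_of_lt {a b c d : Ordinal} (h₁ : a ≤ b) (h₂ : c < d) :
    a ♯ c < b ♯ d :=
  (nadd_le_nadd_right h₁ c).trans_lt (nadd_lt_nadd_left h₂ b)

theorem nadd_le_iff {a b c : Ordinal} :
    b ♯ c ≤ a ↔ (∀ b' < b, b' ♯ c < a) ∧ ∀ c' < c, b ♯ c' < a := by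
  refine ⟨fun H => ⟨fun b' h => (nadd_lt_nadd_right h c).trans_le H,
    fun c' h => (nadd_lt_nadd_left h b).trans_le H⟩, fun H => ?_⟩
  rw [nadd]
  exact max_le (Ordinal.iSup_le fun x => succ_le_of_lt (H.1 x.1 x.2))
    (Ordinal.iSup_le fun x => succ_le_of_lt (H.2 x.1 x.2))

theorem lt_nadd_iff {a b c : Ordinal} :
    a < b ♯ c ↔ (∃ b' < b, a ≤ b' ♯ c) ∨ ∃ c' < c, a ≤ b ♯ c' := by
  rw [← not_le, nadd_le_iff]
  simp only [not_and_or, not_forall, not_lt, exists_prop]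

theorem nadd_comm (a b : Ordinal) : a ♯ b = b ♯ a := by
  rw [nadd, nadd, max_comm]
  congr 2 <;> funext x
  · rw [nadd_comm a x.1]
  · rw [nadd_comm x.1 b]
termination_by (a, b)
decreasing_by
  · exact Prod.Lex.right _ x.2
  · exact Prod.Lex.left _ _ x.2

theorem nadd_zero (a : Ordinal) : a ♯ 0 = a := by
  refine le_antisymm (nadd_le_iff.2 ⟨fun b h => ?_, fun c h => absurd h not_lt_zero⟩)
    (le_of_forall_lt fun b h => ?_)
  · rwa [nadd_zero b]
  · simpa only [nadd_zero b] using nadd_lt_nadd_right h 0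
termination_by a

theorem zero_nadd (a : Ordinal) : 0 ♯ a = a := by
  rw [nadd_comm, nadd_zero]

theorem nadd_succ (a b : Ordinal) : a ♯ succ b = succ (a ♯ b) := by
  refine le_antisymm (nadd_le_iff.2 ⟨fun a' h => ?_, fun b' h => ?_⟩)
    (succ_le_of_lt (nadd_lt_nadd_left (lt_succ b) a))
  · rw [nadd_succ a' b, succ_lt_succ_iff]
    exact nadd_lt_nadd_right h b
  · exact lt_succ_of_le (nadd_le_nadd_left (le_of_lt_succ h) a)
termination_by a

theorem nadd_assoc (a b c : Ordinal) : a ♯ b ♯ c = a ♯ (b ♯ c) := by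
  refine le_antisymm (nadd_le_iff.2 ⟨fun d hd => ?_, fun c' hc => ?_⟩)
    (nadd_le_iff.2 ⟨fun a' ha => ?_, fun d hd => ?_⟩)
  · rcases lt_nadd_iff.1 hd with ⟨a', ha, h⟩ | ⟨b', hb, h⟩
    · calc d ♯ c ≤ a' ♯ b ♯ c := nadd_le_nadd_right h c
        _ = a' ♯ (b ♯ c) := nadd_assoc a' b c
        _ < a ♯ (b ♯ c) := nadd_lt_nadd_right ha _
    · calc d ♯ c ≤ a ♯ b' ♯ c := nadd_le_nadd_right h c
        _ = a ♯ (b' ♯ c) := nadd_assoc a b' c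
        _ < a ♯ (b ♯ c) := nadd_lt_nadd_left (nadd_lt_nadd_right hb c) a
  · rw [nadd_assoc a b c']
    exact nadd_lt_nadd_left (nadd_lt_nadd_left hc b) a
  · rw [← nadd_assoc a' b c]
    exact nadd_lt_nadd_right (nadd_lt_nadd_right ha b) c
  · rcases lt_nadd_iff.1 hd with ⟨b', hb, h⟩ | ⟨c', hc, h⟩
    · calc a ♯ d ≤ a ♯ (b' ♯ c) := nadd_le_nadd_left h a
        _ = a ♯ b' ♯ c := (nadd_assoc a b' c).symm
        _ < a ♯ b ♯ c := nadd_lt_nadd_right (nadd_lt_nadd_left hb a) c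
    · calc a ♯ d ≤ a ♯ (b ♯ c') := nadd_le_nadd_left h a
        _ = a ♯ b ♯ c' := (nadd_assoc a b c').symm
        _ < a ♯ b ♯ c := nadd_lt_nadd_left hc _
termination_by (a, b, c)

instance : Std.Associative (α := Ordinal) nadd := ⟨nadd_assoc⟩
instance : Std.Commutative (α := Ordinal) nadd := ⟨nadd_comm⟩

theorem nadd_left_comm (a b c : Ordinal) : a ♯ (b ♯ c) = b ♯ (a ♯ c) := by
  rw [← nadd_assoc, nadd_comm a, nadd_assoc]

theorem add_le_nadd (a b : Ordinal) : a + b ≤ a ♯ b := by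
  induction b using WellFoundedLT.induction with | _ b ih =>
  refine le_of_forall_lt fun d hd => ?_
  rcases lt_or_ge d a with h | h
  · exact h.trans_le (by simpa only [nadd_zero] using nadd_le_nadd_left zero_le a)
  · have hsub : d - a < b := by
      rwa [← Ordinal.add_sub_cancel_of_le h, add_lt_add_iff_left] at hd
    calc d = a + (d - a) := (Ordinal.add_sub_cancel_of_le h).symm
      _ ≤ a ♯ (d - a) := ih _ hsub
      _ < a ♯ b := nadd_lt_nadd_left hsub a

theorem nadd_add_le (a b c : Ordinal) : a ♯ b + c ≤ a ♯ (b + c) := by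
  induction c using Ordinal.limitRecOn with
  | zero => simp only [add_zero, le_refl]
  | add_one c ih =>
    rw [← add_assoc, ← add_assoc, ← succ_eq_add_one, ← succ_eq_add_one, nadd_succ]
    exact succ_le_succ ih
  | limit c hc ih =>
    exact (add_le_iff_of_isSuccLimit hc).2 fun c' hc' =>
      (ih c' hc').trans (nadd_le_nadd_left (add_le_add_right hc'.le b) a)

theorem nmul_nadd_lt {a a' b b' : Ordinal} (ha : a' < a) (hb : b' < b) :
    a' ⨳ b ♯ a ⨳ b' < a ⨳ b ♯ a' ⨳ b' := by
  have hne : {c | ∀ a' < a, ∀ b' < b, a' ⨳ b ♯ a ⨳ b' < c ♯ a' ⨳ b'}.Nonempty := by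
    refine ⟨⨆ p : Set.Iio a × Set.Iio b, succ (p.1.1 ⨳ b ♯ a ⨳ p.2.1), fun a' ha b' hb => ?_⟩
    exact (lt_succ _).trans_le <| (Ordinal.le_iSup (fun p : Set.Iio a × Set.Iio b =>
      succ (p.1.1 ⨳ b ♯ a ⨳ p.2.1)) (⟨a', ha⟩, ⟨b', hb⟩)).trans <|
      le_self_add.trans (add_le_nadd _ _)
  have := csInf_mem hne
  rw [← nmul] at this
  exact this a' ha b' hb

theorem lt_nmul_iff {a b c : Ordinal} :
    c < a ⨳ b ↔ ∃ a' < a, ∃ b' < b, c ♯ a' ⨳ b' ≤ a' ⨳ b ♯ a ⨳ b' := by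
  refine ⟨fun h => ?_, fun ⟨a', ha, b', hb, h⟩ => ?_⟩
  · rw [nmul] at h
    by_contra! hc
    exact notMem_of_lt_csInf h ⟨0, fun _ _ => zero_le⟩ hc
  · exact (nadd_lt_nadd_iff_right _).1 (h.trans_lt (nmul_nadd_lt ha hb))

theorem nmul_le_iff {a b c : Ordinal} :
    a ⨳ b ≤ c ↔ ∀ a' < a, ∀ b' < b, a' ⨳ b ♯ a ⨳ b' < c ♯ a' ⨳ b' := by
  simp only [← not_lt, lt_nmul_iff, not_exists, not_and, not_not]

theorem nmul_zero (a : Ordinal) : a ⨳ 0 = 0 :=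
  nonpos_iff_eq_zero.1 (nmul_le_iff.2 fun _ _ _ hb => absurd hb not_lt_zero)

theorem zero_nmul (b : Ordinal) : 0 ⨳ b = 0 :=
  nonpos_iff_eq_zero.1 (nmul_le_iff.2 fun _ ha _ _ => absurd ha not_lt_zero)

theorem nmul_nadd_le {a a' b b' : Ordinal} (ha : a' ≤ a) (hb : b' ≤ b) :
    a' ⨳ b ♯ a ⨳ b' ≤ a ⨳ b ♯ a' ⨳ b' := by
  rcases ha.lt_or_eq with ha | rfl
  · rcases hb.lt_or_eq with hb | rfl
    · exact (nmul_nadd_lt ha hb).le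
    · rw [nadd_comm]
  · rw [nadd_comm]

theorem nmul_nadd (a b c : Ordinal) : a ⨳ (b ♯ c) = a ⨳ b ♯ a ⨳ c := by
  refine le_antisymm (nmul_le_iff.2 fun a' ha d hd => ?_)
    (nadd_le_iff.2 ⟨fun d hd => ?_, fun d hd => ?_⟩)
  · rw [nmul_nadd a' b c]
    rcases lt_nadd_iff.1 hd with ⟨b', hb, hd⟩ | ⟨c', hc, hd⟩
    · have h := nmul_nadd_le ha.le hd
      rw [nmul_nadd a' b' c, nmul_nadd a b' c] at h
      refine (nadd_lt_nadd_iff_right (a ⨳ b' ♯ a' ⨳ b')).1 ?_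
      convert nadd_lt_nadd_of_lt_of_le (nmul_nadd_lt ha hb) h using 1 <;> ac_rfl
    · have h := nmul_nadd_le ha.le hd
      rw [nmul_nadd a' b c', nmul_nadd a b c'] at h
      refine (nadd_lt_nadd_iff_right (a ⨳ c' ♯ a' ⨳ c')).1 ?_
      convert nadd_lt_nadd_of_lt_of_le (nmul_nadd_lt ha hc) h using 1 <;> ac_rfl
  · rcases lt_nmul_iff.1 hd with ⟨a', ha, b', hb, hd⟩
    have h := nmul_nadd_lt ha (nadd_lt_nadd_right hb c)
    rw [nmul_nadd a' b c, nmul_nadd a b' c, nmul_nadd a' b' c] at h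
    refine (nadd_lt_nadd_iff_right (a' ⨳ b' ♯ a' ⨳ b ♯ a' ⨳ c ♯ a ⨳ b')).1 ?_
    convert nadd_lt_nadd_of_le_of_lt hd h using 1 <;> ac_rfl
  · rcases lt_nmul_iff.1 hd with ⟨a', ha, c', hc, hd⟩
    have h := nmul_nadd_lt ha (nadd_lt_nadd_left hc b)
    rw [nmul_nadd a' b c, nmul_nadd a b c', nmul_nadd a' b c'] at h
    refine (nadd_lt_nadd_iff_right (a' ⨳ c' ♯ a' ⨳ c ♯ a' ⨳ b ♯ a ⨳ c')).1 ?_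
    convert nadd_lt_nadd_of_le_of_lt hd h using 1 <;> ac_rfl
termination_by (a, b, c)

theorem nmul_le_nmul_left {b c : Ordinal} (h : b ≤ c) (a : Ordinal) : a ⨳ b ≤ a ⨳ c := by
  rcases h.lt_or_eq with h | rfl
  · rcases eq_or_ne a 0 with rfl | ha
    · rw [zero_nmul, zero_nmul]
    · refine (lt_nmul_iff.2 ⟨0, pos_iff_ne_zero.2 ha, b, h, ?_⟩).le
      rw [zero_nmul, zero_nmul, nadd_zero, zero_nadd]
  · exact le_rfl

section OmegaPow

variable {c : Ordinal}

theorem opow_mul_nadd_of_lt (hP : IsPrincipal (· ♯ ·) (ω ^ c)) (q : Ordinal) {b : Ordinal}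
    (hb : b < ω ^ c) : ω ^ c * q ♯ b = ω ^ c * q + b := by
  have hc : ω ^ c ≠ 0 := opow_ne_zero c omega0_ne_zero
  induction q using WellFoundedLT.induction generalizing b with | _ q ihq =>
  induction b using WellFoundedLT.induction with | _ b ihb =>
  refine le_antisymm (nadd_le_iff.2 ⟨fun x hx => ?_, fun b' hb' => ?_⟩) (add_le_nadd _ _)
  · have hk : x / ω ^ c < q := (lt_mul_iff_div_lt hc).1 hx
    have hs : x % ω ^ c < ω ^ c := mod_lt x hc
    have hsb : x % ω ^ c ♯ b < ω ^ c := hP hs hb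
    calc x ♯ b = ω ^ c * (x / ω ^ c) ♯ (x % ω ^ c ♯ b) := by
          rw [← nadd_assoc, ihq _ hk hs, div_add_mod]
      _ = ω ^ c * (x / ω ^ c) + (x % ω ^ c ♯ b) := ihq _ hk hsb
      _ < ω ^ c * (x / ω ^ c) + ω ^ c := add_lt_add_right hsb _
      _ = ω ^ c * succ (x / ω ^ c) := (mul_succ _ _).symm
      _ ≤ ω ^ c * q := mul_le_mul_right (succ_le_of_lt hk) _
      _ ≤ ω ^ c * q + b := le_self_add
  · rw [ihb b' hb' (hb'.trans hb)]
    exact add_lt_add_right hb' _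

theorem opow_mul_div_nadd_mod (hP : IsPrincipal (· ♯ ·) (ω ^ c)) (x : Ordinal) :
    ω ^ c * (x / ω ^ c) ♯ x % ω ^ c = x := by
  rw [opow_mul_nadd_of_lt hP _ (mod_lt x (opow_ne_zero c omega0_ne_zero)), div_add_mod]

theorem nadd_lt_opow_mul (hP : IsPrincipal (· ♯ ·) (ω ^ c)) {s b n : Ordinal}
    (hs : s < ω ^ c) (hb : b < ω ^ c * n) : s ♯ b < ω ^ c * n := by
  have hc : ω ^ c ≠ 0 := opow_ne_zero c omega0_ne_zero
  have hst : s ♯ b % ω ^ c < ω ^ c := hP hs (mod_lt b hc)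
  calc s ♯ b = ω ^ c * (b / ω ^ c) ♯ (s ♯ b % ω ^ c) := by
        rw [nadd_left_comm, opow_mul_div_nadd_mod hP]
    _ = ω ^ c * (b / ω ^ c) + (s ♯ b % ω ^ c) := opow_mul_nadd_of_lt hP _ hst
    _ < ω ^ c * (b / ω ^ c) + ω ^ c := add_lt_add_right hst _
    _ = ω ^ c * succ (b / ω ^ c) := (mul_succ _ _).symm
    _ ≤ ω ^ c * n := mul_le_mul_right (succ_le_of_lt ((lt_mul_iff_div_lt hc).1 hb)) _

theorem opow_mul_nadd_of_lt_opow_succ (hP : IsPrincipal (· ♯ ·) (ω ^ c)) (q : Ordinal)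
    {b : Ordinal} (hb : b < ω ^ succ c) : ω ^ c * q ♯ b = ω ^ c * q + b := by
  have hc : ω ^ c ≠ 0 := opow_ne_zero c omega0_ne_zero
  induction q using WellFoundedLT.induction generalizing b with | _ q ihq =>
  induction b using WellFoundedLT.induction with | _ b ihb =>
  refine le_antisymm (nadd_le_iff.2 ⟨fun x hx => ?_, fun b' hb' => ?_⟩) (add_le_nadd _ _)
  · have hk : x / ω ^ c < q := (lt_mul_iff_div_lt hc).1 hx
    have hsb : x % ω ^ c ♯ b < ω ^ c * succ (b / ω ^ c) :=
      nadd_lt_opow_mul hP (mod_lt x hc) (lt_mul_succ_div b hc)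
    obtain ⟨m, hm⟩ := lt_omega0.1 ((lt_mul_iff_div_lt hc).1 (opow_succ ω c ▸ hb))
    have hsb' : x % ω ^ c ♯ b < ω ^ succ c := hsb.trans_le <| by
      rw [opow_succ]
      exact mul_le_mul_right (succ_le_of_lt (hm ▸ natCast_lt_omega0 m)) _
    calc x ♯ b = ω ^ c * (x / ω ^ c) ♯ (x % ω ^ c ♯ b) := by
          rw [← nadd_assoc, opow_mul_div_nadd_mod hP]
      _ = ω ^ c * (x / ω ^ c) + (x % ω ^ c ♯ b) := ihq _ hk hsb'
      _ < ω ^ c * (x / ω ^ c) + ω ^ c * succ (b / ω ^ c) := add_lt_add_right hsb _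
      _ = ω ^ c * succ (x / ω ^ c) + ω ^ c * (b / ω ^ c) := by
          rw [← mul_add, ← mul_add, hm, succ_eq_add_one, succ_eq_add_one, Nat.cast_add_one_comm,
            ← add_assoc]
      _ ≤ ω ^ c * q + ω ^ c * (b / ω ^ c) := by gcongr; exact succ_le_of_lt hk
      _ ≤ ω ^ c * q + b := add_le_add_right (mul_div_le b _) _
  · rw [ihb b' hb' (hb'.trans hb)]
    exact add_lt_add_right hb' _

theorem isPrincipal_nadd_omega0_opow_succ (hP : IsPrincipal (· ♯ ·) (ω ^ c)) :
    IsPrincipal (· ♯ ·) (ω ^ succ c) := by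
  intro x y hx hy
  have hc : ω ^ c ≠ 0 := opow_ne_zero c omega0_ne_zero
  obtain ⟨n, hn⟩ := lt_omega0_opow_succ.1 hy
  have hsy : x % ω ^ c ♯ y < ω ^ succ c :=
    lt_omega0_opow_succ.2 ⟨n, nadd_lt_opow_mul hP (mod_lt x hc) hn⟩
  calc x ♯ y = ω ^ c * (x / ω ^ c) ♯ (x % ω ^ c ♯ y) := by
        rw [← nadd_assoc, opow_mul_div_nadd_mod hP]
    _ = ω ^ c * (x / ω ^ c) + (x % ω ^ c ♯ y) := opow_mul_nadd_of_lt_opow_succ hP _ hsy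
    _ < ω ^ succ c := isPrincipal_add_omega0_opow _ ((mul_div_le x _).trans_lt hx) hsy

end OmegaPow

theorem isPrincipal_nadd_omega0_opow (e : Ordinal) : IsPrincipal (· ♯ ·) (ω ^ e) := by
  induction e using WellFoundedLT.induction with | _ e ih =>
  rcases eq_or_ne e 0 with rfl | he
  · simp [nadd_zero]
  intro x y hx hy
  set d := max (log ω x) (log ω y)
  have hd : d < e := max_lt (lt_log_of_lt_opow he hx) (lt_log_of_lt_opow he hy)
  have hlt : ∀ z, log ω z ≤ d → z < ω ^ succ d := fun z hz =>
    (lt_opow_succ_log_self one_lt_omega0 z).trans_le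
      (opow_le_opow_right omega0_pos (succ_le_succ hz))
  exact (isPrincipal_nadd_omega0_opow_succ (ih d hd) (hlt x (le_max_left _ _))
    (hlt y (le_max_right _ _))).trans_le (opow_le_opow_right omega0_pos (succ_le_of_lt hd))

theorem nmul_add_nmul_of_omega0_opow_le (α : Ordinal) {r g c : Ordinal} (hr : r < ω ^ c)
    (hg : ω ^ c ≤ g) : α ⨳ r + α ⨳ g = α ⨳ g := by
  have hmul : ∀ n : ℕ, ∃ r' < ω ^ c, α ⨳ r * n ≤ α ⨳ r' := by
    intro n
    induction n with
    | zero => exact ⟨0, opow_pos c omega0_pos, by simp⟩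
    | succ n ih =>
      obtain ⟨r', hr', hle⟩ := ih
      refine ⟨r' ♯ r, isPrincipal_nadd_omega0_opow c hr' hr, ?_⟩
      calc α ⨳ r * (n + 1 : ℕ) = α ⨳ r * n + α ⨳ r := by rw [Nat.cast_succ, mul_add_one]
        _ ≤ α ⨳ r' + α ⨳ r := add_le_add_left hle _
        _ ≤ α ⨳ r' ♯ α ⨳ r := add_le_nadd _ _
        _ = α ⨳ (r' ♯ r) := (nmul_nadd _ _ _).symm
  rw [add_eq_right_iff_mul_omega0_le, mul_le_iff_of_isSuccLimit isSuccLimit_omega0]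
  intro n hn
  obtain ⟨n, rfl⟩ := lt_omega0.1 hn
  obtain ⟨r', hr', hle⟩ := hmul n
  exact hle.trans (nmul_le_nmul_left (hr'.le.trans hg) α)

end Ordinal

/-- Subdistributivity of the natural (Hessenberg) product over the usual ordinal sum:
`(α ⨳ β) + (α ⨳ γ) ≤ α ⨳ (β + γ)`. -/
theorem nmul_add_nmul_le_nmul_add (α β γ : Ordinal) :
    (α ⨳ β) + (α ⨳ γ) ≤ α ⨳ (β + γ) := by
  open Ordinal in
  rcases eq_or_ne γ 0 with rfl | hγ
  · rw [nmul_zero, add_zero, add_zero]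
  set c := log ω γ
  have hP := isPrincipal_nadd_omega0_opow c
  have hr : β % ω ^ c < ω ^ c := mod_lt β (opow_ne_zero c omega0_ne_zero)
  have hγc : ω ^ c ≤ γ := opow_log_le_self ω hγ
  have hβγ : ω ^ c * (β / ω ^ c) ♯ γ = β + γ := by
    rw [opow_mul_nadd_of_lt_opow_succ hP _ (lt_opow_succ_log_self one_lt_omega0 γ)]
    conv_rhs => rw [← div_add_mod β (ω ^ c), add_assoc, add_of_omega0_opow_le hr hγc]
  calc α ⨳ β + α ⨳ γ
      = (α ⨳ (ω ^ c * (β / ω ^ c)) ♯ α ⨳ (β % ω ^ c)) + α ⨳ γ := by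
        rw [← nmul_nadd, opow_mul_div_nadd_mod hP]
    _ ≤ α ⨳ (ω ^ c * (β / ω ^ c)) ♯ (α ⨳ (β % ω ^ c) + α ⨳ γ) := nadd_add_le _ _ _
    _ = α ⨳ (β + γ) := by
        rw [nmul_add_nmul_of_omega0_opow_le α hr hγc, ← nmul_nadd, hβγ]
end

section
/- Let (P, ≤) be a well-founded partial order, p₁ ∈ P and p₂ ∈ P ∪ {∞} with p₁ ≤ p₂, and assume the interval [p₁, p₂) is branching free. Then for each p ∈ [p₁, p₂), rank(p, P) = rank(p₁, P) + rank(P↾[p₁, p)), where + is ordinal addition. Moreover, if p₂ ∈ P, then rank(p₂, P) ≥ rank(p₁, P) + rank(P↾[p₁, p₂)). -/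
/-!
By branching freeness, a predecessor of `p ∈ [p₁, p₂)` lies either below `p₁` or in `[p₁, p)`,
so `rank p` is the supremum of `rank x + 1` over `x ∈ [p₁, p)`. Since ranks only see what lies
below, the rank of `x` inside `[p₁, b)` is the rank of the suborder `[p₁, x)`; hence
`rank [p₁, p) = sup { rank [p₁, x) + 1 | x ∈ [p₁, p) }`. Well-founded induction on `p`, with
ordinal addition on the left commuting with nonempty suprema, turns the first identity into
`rank p = rank p₁ + rank [p₁, p)`. For `p₂ = q ∈ P` the same computation only gives `≤`, as `q`
may have predecessors that are not comparable with `p₁`.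
-/

universe u

/-- The ordinal rank of an element of a well-founded partial order:
`rank p = sup { rank p' + 1 | p' < p }`. -/
noncomputable def elRank {P : Type u} [PartialOrder P] [WellFoundedLT P] (p : P) :
    Ordinal.{u} :=
  IsWellFounded.rank (α := P) (· < ·) p

/-- The ordinal rank of a well-founded partial order:
`rank P = sup { rank p + 1 | p ∈ P }` (with `sup ∅ = 0`). -/
noncomputable def ordRank (P : Type u) [PartialOrder P] [WellFoundedLT P] : Ordinal.{u} :=
  ⨆ p : P, elRank p + 1

theorem IsWellFounded.rank_initialSeg {α β : Type u} {r : α → α → Prop} {s : β → β → Prop}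
    [IsWellFounded α r] [IsWellFounded β s] (f : InitialSeg r s) (a : α) :
    IsWellFounded.rank s (f a) = IsWellFounded.rank r a := by
  induction a using IsWellFounded.induction r with
  | _ a ih =>
    rw [IsWellFounded.rank_eq, IsWellFounded.rank_eq]
    refine le_antisymm (Ordinal.iSup_le fun ⟨b, hb⟩ => ?_) (Ordinal.iSup_le fun ⟨b, hb⟩ => ?_)
    · obtain ⟨c, rfl, hc⟩ := f.exists_eq_iff_rel.1 hb
      rw [ih c hc]
      exact Ordinal.le_iSup (fun c : {c // r c a} => Order.succ (rank r c.1)) ⟨c, hc⟩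
    · rw [← ih b hb]
      exact Ordinal.le_iSup (fun c : {c // s c (f a)} => Order.succ (rank s c.1))
        ⟨f b, f.map_rel_iff.2 hb⟩

section Rank

variable {α β : Type u} [PartialOrder α] [WellFoundedLT α] [PartialOrder β] [WellFoundedLT β]

theorem elRank_initialSeg (f : α ≤i β) (a : α) : elRank (f a) = elRank a :=
  IsWellFounded.rank_initialSeg f a

theorem ordRank_congr (e : α ≃o β) : ordRank α = ordRank β := by
  rw [ordRank, ordRank, ← e.toEquiv.iSup_comp]
  exact iSup_congr fun a => by rw [← elRank_initialSeg e.toInitialSeg a]; rfl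

theorem elRank_eq_ordRank_Iio (a : α) : elRank a = ordRank (Set.Iio a) := by
  rw [elRank, IsWellFounded.rank_eq, ordRank]
  refine iSup_congr fun b => ?_
  rw [← elRank_initialSeg (Set.principalSegIio a : Set.Iio a ≤i α) b, Order.succ_eq_add_one]
  rfl

theorem elRank_eq_iSup (a : α) : elRank a = ⨆ b : Set.Iio a, elRank (b : α) + 1 := by
  rw [elRank, IsWellFounded.rank_eq]
  rfl

end Rank

section Interval

variable {P : Type u} [PartialOrder P] [WellFoundedLT P]

theorem iSup_Ival_elRank_add_one_le (p₁ q : P) :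
    ⨆ x : Ival p₁ q, elRank (x : P) + 1 ≤ elRank q :=
  Ordinal.iSup_le fun x => Order.add_one_le_of_lt <|
    IsWellFounded.rank_lt_of_rel (WithTop.coe_lt_coe.1 x.2.2)

def iioOrderIsoIval {p₁ : P} {b : WithTop P} (x : Ival p₁ b) :
    Set.Iio x ≃o Ival p₁ (x : P) where
  toFun y := ⟨y.1.1, y.1.2.1, WithTop.coe_lt_coe.2 y.2⟩
  invFun y := ⟨⟨y.1, y.2.1, y.2.2.trans x.2.2⟩, WithTop.coe_lt_coe.1 y.2.2⟩
  left_inv _ := rfl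
  right_inv _ := rfl
  map_rel_iff' := Iff.rfl

theorem ordRank_Ival_eq_iSup (p₁ : P) (b : WithTop P) :
    ordRank (Ival p₁ b) = ⨆ x : Ival p₁ b, ordRank (Ival p₁ (x : P)) + 1 :=
  iSup_congr fun x => by rw [elRank_eq_ordRank_Iio, ordRank_congr (iioOrderIsoIval x)]

theorem ordRank_Ival_self (p₁ : P) : ordRank (Ival p₁ p₁) = 0 := by
  have : IsEmpty (Ival p₁ p₁) := ⟨fun x => (x.2.1.trans_lt (WithTop.coe_lt_coe.1 x.2.2)).false⟩
  simp [ordRank]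

theorem elRank_add_ordRank_Ival {p₁ q : P} (h : p₁ < q) :
    elRank p₁ + ordRank (Ival p₁ q) =
      ⨆ x : Ival p₁ q, elRank p₁ + ordRank (Ival p₁ (x : P)) + 1 := by
  have : Nonempty (Ival p₁ q) := ⟨⟨p₁, le_rfl, WithTop.coe_lt_coe.2 h⟩⟩
  rw [ordRank_Ival_eq_iSup p₁ q, Ordinal.add_iSup]
  simp only [add_assoc]

theorem elRank_eq_iSup_Ival {p₁ p : P} (h : p₁ < p) (hcomp : ∀ x < p, x ≤ p₁ ∨ p₁ ≤ x) :
    elRank p = ⨆ x : Ival p₁ p, elRank (x : P) + 1 := by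
  refine le_antisymm ?_ (iSup_Ival_elRank_add_one_le p₁ p)
  rw [elRank_eq_iSup]
  refine Ordinal.iSup_le fun ⟨x, hx⟩ => ?_
  rcases hcomp x hx with hle | hge
  · calc elRank x + 1 ≤ elRank p₁ + 1 := by
          gcongr; exact WellFoundedLT.rank_strictMono.monotone hle
      _ ≤ _ := Ordinal.le_iSup (fun y : Ival p₁ p => elRank (y : P) + 1)
          ⟨p₁, le_rfl, WithTop.coe_lt_coe.2 h⟩
  · exact Ordinal.le_iSup (fun y : Ival p₁ p => elRank (y : P) + 1)
      ⟨x, hge, WithTop.coe_lt_coe.2 hx⟩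

theorem BranchingFree.elRank_eq_add_ordRank {p₁ : P} {p₂ : WithTop P}
    (hbf : BranchingFree p₁ p₂) {p : P} (hp : p ∈ Ival p₁ p₂) :
    elRank p = elRank p₁ + ordRank (Ival p₁ p) := by
  induction p using WellFoundedLT.induction with
  | ind p ih =>
    obtain rfl | h := hp.1.eq_or_lt
    · rw [ordRank_Ival_self, add_zero]
    calc elRank p = ⨆ x : Ival p₁ p, elRank (x : P) + 1 := elRank_eq_iSup_Ival h (hbf p hp)
      _ = ⨆ x : Ival p₁ p, elRank p₁ + ordRank (Ival p₁ (x : P)) + 1 :=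
        iSup_congr fun x => by
          rw [ih x (WithTop.coe_lt_coe.1 x.2.2) ⟨x.2.1, x.2.2.trans hp.2⟩]
      _ = elRank p₁ + ordRank (Ival p₁ p) := (elRank_add_ordRank_Ival h).symm

end Interval

/-- If `[p₁, p₂)` is branching free, then `rank p = rank p₁ + rank (P↾[p₁, p))` for each
`p ∈ [p₁, p₂)`; moreover if `p₂ ∈ P`, then `rank p₂ ≥ rank p₁ + rank (P↾[p₁, p₂))`. -/
theorem rank_interval_shift {P : Type u} [PartialOrder P] [WellFoundedLT P]
    (p₁ : P) (p₂ : WithTop P) (h₁₂ : (p₁ : WithTop P) ≤ p₂) (hbf : BranchingFree p₁ p₂) :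
    (∀ p ∈ Ival p₁ p₂, elRank p = elRank p₁ + ordRank ↥(Ival p₁ (p : WithTop P))) ∧
    (∀ q : P, p₂ = (q : WithTop P) → elRank p₁ + ordRank ↥(Ival p₁ p₂) ≤ elRank q) := by
  refine ⟨fun p hp => hbf.elRank_eq_add_ordRank hp, fun q hq => ?_⟩
  subst hq
  obtain rfl | h := (WithTop.coe_le_coe.1 h₁₂).eq_or_lt
  · rw [ordRank_Ival_self, add_zero]
  calc elRank p₁ + ordRank (Ival p₁ q)
      = ⨆ x : Ival p₁ q, elRank p₁ + ordRank (Ival p₁ (x : P)) + 1 := elRank_add_ordRank_Ival h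
    _ = ⨆ x : Ival p₁ q, elRank (x : P) + 1 :=
      iSup_congr fun x => by rw [← hbf.elRank_eq_add_ordRank x.2]
    _ ≤ elRank q := iSup_Ival_elRank_add_one_le p₁ q
end

section
/- Let (P, ≤) be a well-founded partial order, p₁ ∈ P and p₂ ∈ P ∪ {∞} with p₁ ≤ p₂, and assume the interval [p₁, p₂) is branching free. Then for every p ∈ [p₁, p₂), rank(p, P) < rank(p₁, P) + rank(P↾[p₁, p₂)), where + is ordinal addition. -/
universe u

section Rank

variable {P : Type u} [PartialOrder P] [WellFoundedLT P]

theorem elRank_lt_elRank {a b : P} (h : a < b) : elRank a < elRank b :=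
  IsWellFounded.rank_lt_of_rel h

theorem elRank_le_iff {p : P} {o : Ordinal.{u}} : elRank p ≤ o ↔ ∀ x < p, elRank x < o := by
  rw [elRank, IsWellFounded.rank_eq, Ordinal.iSup_le_iff]
  simp only [Order.succ_le_iff, Subtype.forall]
  rfl

theorem elRank_lt_ordRank (p : P) : elRank p < ordRank P :=
  (Order.lt_add_one_iff.mpr le_rfl).trans_le (Ordinal.le_iSup (fun q : P => elRank q + 1) p)

end Rank

section Interval

variable {P : Type u} [PartialOrder P] {p₁ p x : P} {p₂ : WithTop P}

theorem left_mem_Ival_of_mem (hp : p ∈ Ival p₁ p₂) : p₁ ∈ Ival p₁ p₂ :=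
  ⟨le_rfl, (WithTop.coe_le_coe.mpr hp.1).trans_lt hp.2⟩

theorem mem_Ival_of_le_of_lt (hp : p ∈ Ival p₁ p₂) (hx : p₁ ≤ x) (hxp : x < p) :
    x ∈ Ival p₁ p₂ :=
  ⟨hx, (WithTop.coe_lt_coe.mpr hxp).trans hp.2⟩

/-- Below `p`, branching freeness splits `P` into elements below `p₁` and elements of the
interval, so a descending chain from `p` first runs inside the interval and then below `p₁`. -/
theorem BranchingFree.elRank_le_add [WellFoundedLT P] (hbf : BranchingFree p₁ p₂) (p : P)
    (hp : p ∈ Ival p₁ p₂) : elRank p ≤ elRank p₁ + elRank (⟨p, hp⟩ : Ival p₁ p₂) := by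
  induction p using WellFoundedLT.induction with
  | ind p ih =>
  refine elRank_le_iff.mpr fun x hxp => ?_
  rcases hbf p hp x hxp with hxp₁ | hp₁x
  · rcases hxp₁.lt_or_eq with hlt | rfl
    · exact (elRank_lt_elRank hlt).trans_le le_self_add
    · have hlt : (⟨x, left_mem_Ival_of_mem hp⟩ : Ival x p₂) < ⟨p, hp⟩ := hxp
      exact lt_add_of_pos_right _ (pos_of_gt (elRank_lt_elRank hlt))
  · have hx := mem_Ival_of_le_of_lt hp hp₁x hxp
    calc elRank x ≤ elRank p₁ + elRank (⟨x, hx⟩ : Ival p₁ p₂) := ih x hxp hx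
      _ < elRank p₁ + elRank (⟨p, hp⟩ : Ival p₁ p₂) :=
        add_lt_add_right (elRank_lt_elRank (show (⟨x, hx⟩ : Ival p₁ p₂) < ⟨p, hp⟩ from hxp)) _

end Interval

theorem rank_lt_of_mem_branchingFree_general {P : Type u} [PartialOrder P] [WellFoundedLT P]
    (p₁ : P) (p₂ : WithTop P) (hbf : BranchingFree p₁ p₂) :
    ∀ p ∈ Ival p₁ p₂, elRank p < elRank p₁ + ordRank ↥(Ival p₁ p₂) := fun p hp =>
  calc elRank p ≤ elRank p₁ + elRank (⟨p, hp⟩ : Ival p₁ p₂) := hbf.elRank_le_add p hp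
    _ < elRank p₁ + ordRank ↥(Ival p₁ p₂) := add_lt_add_right (elRank_lt_ordRank _) _

/-- If `[p₁, p₂)` is branching free, then for every `p ∈ [p₁, p₂)` we have
`rank p < rank p₁ + rank (P↾[p₁, p₂))`. -/
theorem rank_lt_of_mem_branchingFree {P : Type u} [PartialOrder P] [WellFoundedLT P]
    (p₁ : P) (p₂ : WithTop P) (h₁₂ : (p₁ : WithTop P) ≤ p₂) (hbf : BranchingFree p₁ p₂) :
    ∀ p ∈ Ival p₁ p₂, elRank p < elRank p₁ + ordRank ↥(Ival p₁ p₂) :=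
  rank_lt_of_mem_branchingFree_general p₁ p₂ hbf
end

section
/- Let P, P₁, P₂ be wulpos (well-founded upwards linear partial orders). If P is a box-augmentation of (P₁, P₂), then P₁ or P₂ contains no branching node. -/
universe u

/-- `a` is a branching node: there are `b < a` and `c < a` which are incomparable. -/
def IsBranchingNode {P : Type u} [PartialOrder P] (a : P) : Prop :=
  ∃ b c : P, b < a ∧ c < a ∧ ¬ b ≤ c ∧ ¬ c ≤ b

/-!
Suppose `a₁ ∈ B₁` has incomparable predecessors `b₁, c₁` and `a₂ ∈ B₂` has incomparable
predecessors `b₂, c₂`. In an upwards linear order an element comparable with both members of an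
incomparable pair must lie above both of them (it cannot lie below one of them and above the
other, nor be a common lower bound). Now `η (b₁, a₂)` is comparable with each of the
incomparable points `η (a₁, b₂)`, `η (a₁, c₂)`, since it shares the lower bounds `η (b₁, b₂)`,
`η (b₁, c₂)` with them, so `η (a₁, b₂) ≤ η (b₁, a₂)`. Swapping the coordinates gives the reverse
inequality, hence `η (a₁, b₂) = η (b₁, a₂)`, contradicting injectivity of `η` as `b₁ ≠ a₁`.
-/

open Relation

theorem UpwardsLinear.le_of_symmGen_of_incompRel {P : Type u} [PartialOrder P]
    (hP : UpwardsLinear P) {x x' y : P} (hxx' : IncompRel (· ≤ ·) x x')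
    (hx : SymmGen (· ≤ ·) x y) (hx' : SymmGen (· ≤ ·) x' y) : x ≤ y := by
  rcases hx with hxy | hyx
  · exact hxy
  rcases hx' with hx'y | hyx'
  · exact absurd (hx'y.trans hyx) hxx'.not_ge
  have hyx_lt : y < x := hyx.lt_of_ne fun h => hxx'.not_le (h ▸ hyx')
  have hyx'_lt : y < x' := hyx'.lt_of_ne fun h => hxx'.not_ge (h ▸ hyx)
  exact absurd (hP y x x' hyx_lt hyx'_lt) fun h => h.elim hxx'.not_le hxx'.not_ge

section BoxAugmentation

variable {P B₁ B₂ : Type u} [PartialOrder P] [PartialOrder B₁] [PartialOrder B₂]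
  {η : B₁ × B₂ → P}

theorem le_of_boxAugmentation_of_branching (hP : UpwardsLinear P)
    (hbox₁ : ∀ (d : B₂) (e e' : B₁), e ≤ e' ↔ η (e, d) ≤ η (e', d))
    (hbox₂ : ∀ (d : B₁) (e e' : B₂), e ≤ e' ↔ η (d, e) ≤ η (d, e'))
    {a₁ b₁ : B₁} {a₂ b₂ c₂ : B₂} (hb₁ : b₁ < a₁) (hb₂ : b₂ < a₂) (hc₂ : c₂ < a₂)
    (hbc₂ : IncompRel (· ≤ ·) b₂ c₂) : η (a₁, b₂) ≤ η (b₁, a₂) := by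
  have mono₁ d := strictMono_of_le_iff_le (hbox₁ d)
  have mono₂ d := strictMono_of_le_iff_le (hbox₂ d)
  have hincomp : IncompRel (· ≤ ·) (η (a₁, b₂)) (η (a₁, c₂)) :=
    ⟨fun h => hbc₂.not_le ((hbox₂ a₁ b₂ c₂).2 h), fun h => hbc₂.not_ge ((hbox₂ a₁ c₂ b₂).2 h)⟩
  refine hP.le_of_symmGen_of_incompRel hincomp ?_ ?_
  · exact hP (η (b₁, b₂)) _ _ (mono₁ b₂ hb₁) (mono₂ b₁ hb₂)
  · exact hP (η (b₁, c₂)) _ _ (mono₁ c₂ hb₁) (mono₂ b₁ hc₂)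

end BoxAugmentation

theorem boxAugmentation_branching_node_general {P B₁ B₂ : Type u}
    [PartialOrder P] [PartialOrder B₁] [PartialOrder B₂]
    (hP : UpwardsLinear P)
    (η : B₁ × B₂ ≃ P)
    (hbox₁ : ∀ (d : B₂) (e e' : B₁), e ≤ e' ↔ η (e, d) ≤ η (e', d))
    (hbox₂ : ∀ (d : B₁) (e e' : B₂), e ≤ e' ↔ η (d, e) ≤ η (d, e')) :
    (∀ a : B₁, ¬ IsBranchingNode a) ∨ (∀ a : B₂, ¬ IsBranchingNode a) := by
  by_contra! ⟨⟨a₁, b₁, c₁, hb₁, hc₁, hbc₁⟩, ⟨a₂, b₂, c₂, hb₂, hc₂, hbc₂⟩⟩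
  have hle : η (a₁, b₂) ≤ η (b₁, a₂) :=
    le_of_boxAugmentation_of_branching hP hbox₁ hbox₂ hb₁ hb₂ hc₂ hbc₂
  have hge : η (b₁, a₂) ≤ η (a₁, b₂) :=
    le_of_boxAugmentation_of_branching (η := fun p => η p.swap) hP hbox₂ hbox₁ hb₂ hb₁ hc₁ hbc₁
  have heq := η.injective (hle.antisymm hge)
  exact hb₁.ne (congrArg Prod.fst heq).symm

/-- If a wulpo `P` is a box-augmentation of two wulpos `(B₁, B₂)` (witnessed by a bijection
`η : B₁ × B₂ → P` which is an order embedding in each component), then `B₁` or `B₂`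
contains no branching node. -/
theorem boxAugmentation_branching_node {P B₁ B₂ : Type u}
    [PartialOrder P] [PartialOrder B₁] [PartialOrder B₂]
    [WellFoundedLT P] [WellFoundedLT B₁] [WellFoundedLT B₂]
    (hP : UpwardsLinear P) (h₁ : UpwardsLinear B₁) (h₂ : UpwardsLinear B₂)
    (η : B₁ × B₂ ≃ P)
    (hbox₁ : ∀ (d : B₂) (e e' : B₁), e ≤ e' ↔ η (e, d) ≤ η (e', d))
    (hbox₂ : ∀ (d : B₁) (e e' : B₂), e ≤ e' ↔ η (d, e) ≤ η (d, e')) :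
    (∀ a : B₁, ¬ IsBranchingNode a) ∨ (∀ a : B₂, ¬ IsBranchingNode a) :=
  boxAugmentation_branching_node_general hP η hbox₁ hbox₂
end

section
/- Let P and P₁, …, Pₘ be wulpos (well-founded upwards linear partial orders) such that P is a box-augmentation of (P₁, …, Pₘ) via the bijection η. Let Iᵢ ⊆ Pᵢ be a subset on which the induced order is linear, for each 1 ≤ i ≤ m. Then the suborder of P induced on the image η(I₁ × ⋯ × Iₘ) is linear (hence a well-order). -/
/-!
Coordinatewise monotonicity of a box-augmentation `η` gives monotonicity in the product order,
by changing one coordinate at a time. Two points `f`, `g` of a product of chains have a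
coordinatewise minimum `m`, so `η m` lies below both `η f` and `η g`; upwards linearity of `P`
then makes `η f` and `η g` comparable.
-/

universe u

/-- `η` witnesses that `A` is a box-augmentation of the family `B`: `η` is a bijection from
`∏ i, B i` to `A` and, for each coordinate `k` and fixed values at the other coordinates,
the map `e ↦ η (update d k e)` is an order embedding of `B k` into `A`. -/
def IsBoxAugmentation {n : ℕ} (A : Type u) [PartialOrder A] (B : Fin n → Type u)
    [∀ i, PartialOrder (B i)] (η : (∀ i, B i) ≃ A) : Prop :=
  ∀ (k : Fin n) (d : ∀ i, B i) (e e' : B k),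
    e ≤ e' ↔ η (Function.update d k e) ≤ η (Function.update d k e')

theorem UpwardsLinear.le_total_of_le {P : Type u} [PartialOrder P] (hP : UpwardsLinear P)
    {p x y : P} (hx : p ≤ x) (hy : p ≤ y) : x ≤ y ∨ y ≤ x := by
  rcases hx.eq_or_lt with rfl | hx
  · exact Or.inl hy
  rcases hy.eq_or_lt with rfl | hy
  · exact Or.inr hx.le
  exact hP p x y hx hy

theorem Pi.exists_le_le_of_forall_le_total {ι : Type*} {B : ι → Type*} [∀ i, Preorder (B i)]
    {f g : ∀ i, B i} (hfg : ∀ i, f i ≤ g i ∨ g i ≤ f i) : ∃ m, m ≤ f ∧ m ≤ g := by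
  have hm : ∀ i, ∃ m, m ≤ f i ∧ m ≤ g i := fun i =>
    (hfg i).elim (fun h => ⟨f i, le_rfl, h⟩) (fun h => ⟨g i, h, le_rfl⟩)
  choose m hmf hmg using hm
  exact ⟨m, hmf, hmg⟩

namespace IsBoxAugmentation

variable {n : ℕ} {P : Type u} [PartialOrder P] {B : Fin n → Type u} [∀ i, PartialOrder (B i)]
  {η : (∀ i, B i) ≃ P}

theorem le_of_le_of_eqOn_compl (hbox : IsBoxAugmentation P B η) (s : Finset (Fin n))
    {f g : ∀ i, B i} (hle : f ≤ g) (heq : ∀ i ∉ s, f i = g i) : η f ≤ η g := by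
  classical
  induction s using Finset.induction_on generalizing f with
  | empty => rw [funext fun i => heq i (Finset.notMem_empty i)]
  | @insert a s _ ih =>
    have hstep : η f ≤ η (Function.update f a (g a)) := by
      simpa only [Function.update_eq_self] using (hbox a f (f a) (g a)).1 (hle a)
    refine hstep.trans (ih (update_le_iff.2 ⟨le_rfl, fun j _ => hle j⟩) fun i hi => ?_)
    by_cases hia : i = a
    · subst hia
      exact Function.update_self ..
    · rw [Function.update_of_ne hia]
      exact heq i (by simp [hia, hi])

theorem monotone (hbox : IsBoxAugmentation P B η) : Monotone η := fun _ _ hle =>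
  hbox.le_of_le_of_eqOn_compl Finset.univ hle fun i hi => absurd (Finset.mem_univ i) hi

end IsBoxAugmentation

theorem boxAugmentation_image_of_chains_isChain_general {n : ℕ} {P : Type u}
    [PartialOrder P] (B : Fin n → Type u) [∀ i, PartialOrder (B i)]
    (hP : UpwardsLinear P)
    (η : (∀ i, B i) ≃ P) (hbox : IsBoxAugmentation P B η)
    (I : ∀ i, Set (B i)) (hI : ∀ i, IsChain (· ≤ ·) (I i)) :
    IsChain (· ≤ ·) (η '' {f | ∀ i, f i ∈ I i}) := by
  rintro _ ⟨f, hf, rfl⟩ _ ⟨g, hg, rfl⟩ -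
  obtain ⟨m, hmf, hmg⟩ :=
    Pi.exists_le_le_of_forall_le_total fun i => (hI i).total (hf i) (hg i)
  exact hP.le_total_of_le (hbox.monotone hmf) (hbox.monotone hmg)

/-- If a wulpo `P` is a box-augmentation of wulpos `(B 0, …, B (n-1))` via `η`, and each
`I i ⊆ B i` is linearly ordered, then the suborder of `P` induced on `η(∏ i, I i)` is
linear (hence, being well-founded, a well-order). -/
theorem boxAugmentation_image_of_chains_isChain {n : ℕ} {P : Type u}
    [PartialOrder P] [WellFoundedLT P] (B : Fin n → Type u) [∀ i, PartialOrder (B i)]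
    [∀ i, WellFoundedLT (B i)] (hP : UpwardsLinear P) (hB : ∀ i, UpwardsLinear (B i))
    (η : (∀ i, B i) ≃ P) (hbox : IsBoxAugmentation P B η)
    (I : ∀ i, Set (B i)) (hI : ∀ i, IsChain (· ≤ ·) (I i)) :
    IsChain (· ≤ ·) (η '' {f | ∀ i, f i ∈ I i}) :=
  boxAugmentation_image_of_chains_isChain_general B hP η hbox I hI
end

section
/- Let P be a wulpo that is a box-augmentation of wulpos (P₁, …, Pₙ) via the bijection η, and let ≡ be the same-factor equivalence on P. If C ⊆ P is a chain containing elements of k distinct ≡-equivalence classes, then there exist antichains Aᵢ ⊆ Pᵢ (for 1 ≤ i ≤ n) and a chain C' of cardinality k with C' ⊆ η(A₁ × ⋯ × Aₙ). -/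
/-!
Raise each coordinate of the given elements to an upper bound of its connected component, one
bound per component among the finitely many coordinates that occur; upwards linearity of the
factors provides these bounds. Comparable bounds would merge components, so each coordinate set
becomes an antichain, and elements of distinct classes stay distinct. A box-augmentation is
monotone for the product order, so every new element lies above the old one, and upwards
linearity of `P` makes any two new elements comparable, as both lie above the smaller of the
two old ones.
-/

universe u

/-- Two elements lie in the same connected component of the comparability graph. -/
def SameComp {B : Type u} [PartialOrder B] (a b : B) : Prop :=
  Relation.ReflTransGen (fun x y : B => x ≤ y ∨ y ≤ x) a b

section

variable {D : Type u} [PartialOrder D]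

theorem UpwardsLinear.le_total_of_le_s17 (hD : UpwardsLinear D) {x u v : D} (hu : x ≤ u)
    (hv : x ≤ v) : u ≤ v ∨ v ≤ u := by
  rcases hu.lt_or_eq with hu | rfl
  · rcases hv.lt_or_eq with hv | rfl
    · exact hD x u v hu hv
    · exact Or.inr hu.le
  · exact Or.inl hv

theorem sameComp_of_le {a b : D} (h : a ≤ b) : SameComp a b :=
  .single (Or.inl h)

theorem SameComp.symm {a b : D} (h : SameComp a b) : SameComp b a := by
  induction h with
  | refl => exact .refl
  | tail _ hbc ih => exact .head hbc.symm ih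

theorem sameComp_of_le_of_le {a b z : D} (ha : a ≤ z) (hb : b ≤ z) : SameComp a b :=
  (sameComp_of_le ha).trans (sameComp_of_le hb).symm

variable (D) in
def sameCompSetoid : Setoid D :=
  ⟨SameComp, ⟨fun _ => .refl, SameComp.symm, Relation.ReflTransGen.trans⟩⟩

theorem UpwardsLinear.exists_le_of_sameComp (hD : UpwardsLinear D) {a b : D}
    (h : SameComp a b) : ∃ z, a ≤ z ∧ b ≤ z := by
  induction h with
  | refl => exact ⟨a, le_rfl, le_rfl⟩
  | @tail b c _ hbc ih =>
    obtain ⟨z, haz, hbz⟩ := ih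
    rcases hbc with hbc | hcb
    · rcases hD.le_total_of_le_s17 hbz hbc with hzc | hcz
      · exact ⟨c, haz.trans hzc, le_rfl⟩
      · exact ⟨z, haz, hcz⟩
    · exact ⟨z, haz, hcb.trans hbz⟩

theorem UpwardsLinear.exists_upperBound_sameComp (hD : UpwardsLinear D) {S : Set D}
    (hS : S.Finite) (x : D) :
    ∃ z, x ≤ z ∧ ∀ y ∈ S, SameComp x y → y ≤ z := by
  induction S, hS using Set.Finite.induction_on with
  | empty => exact ⟨x, le_rfl, by simp⟩
  | @insert a S _ _ ih =>
    obtain ⟨z, hxz, hz⟩ := ih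
    by_cases hxa : SameComp x a
    · obtain ⟨w, haw, hzw⟩ := hD.exists_le_of_sameComp (hxa.symm.trans (sameComp_of_le hxz))
      refine ⟨w, hxz.trans hzw, ?_⟩
      rintro y (rfl | hy) hxy
      exacts [haw, (hz y hy hxy).trans hzw]
    · refine ⟨z, hxz, ?_⟩
      rintro y (rfl | hy) hxy
      exacts [absurd hxy hxa, hz y hy hxy]

theorem UpwardsLinear.exists_le_map_antichain (hD : UpwardsLinear D) {S : Set D}
    (hS : S.Finite) :
    ∃ t : D → D, (∀ x ∈ S, x ≤ t x) ∧ IsAntichain (· ≤ ·) (t '' S) := by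
  choose bound hbound using fun c : Quotient (sameCompSetoid D) =>
    hD.exists_upperBound_sameComp hS c.out
  have hle : ∀ x ∈ S, x ≤ bound ⟦x⟧ := fun x hx =>
    (hbound ⟦x⟧).2 x hx (Quotient.mk_out (s := sameCompSetoid D) x)
  refine ⟨fun x => bound ⟦x⟧, hle, ?_⟩
  rintro _ ⟨x, hx, rfl⟩ _ ⟨y, hy, rfl⟩ hne hxy
  exact hne (congrArg bound (Quotient.sound
    (sameComp_of_le_of_le ((hle x hx).trans hxy) (hle y hy))))

end

theorem IsBoxAugmentation.monotone_s17 {n : ℕ} {A : Type u} [PartialOrder A] {B : Fin n → Type u}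
    [∀ i, PartialOrder (B i)] {η : (∀ i, B i) ≃ A} (h : IsBoxAugmentation A B η) :
    Monotone η := by
  classical
  intro f g hfg
  have key : ∀ S : Finset (Fin n), η f ≤ η (S.piecewise g f) := by
    intro S
    induction S using Finset.induction_on with
    | empty => simp
    | @insert i S hi ih =>
      have hstep := (h i (S.piecewise g f) (S.piecewise g f i) (g i)).mp
        (by rw [Finset.piecewise_eq_of_notMem _ _ _ hi]; exact hfg i)
      rw [Function.update_eq_self] at hstep
      rw [Finset.piecewise_insert]
      exact ih.trans hstep
  simpa using key Finset.univ

theorem chain_of_distinct_sameFactor_classes_general {n k : ℕ} {P : Type u}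
    [PartialOrder P] (B : Fin n → Type u) [∀ i, PartialOrder (B i)]
    (hP : UpwardsLinear P) (hB : ∀ i, UpwardsLinear (B i))
    (η : (∀ i, B i) ≃ P) (hbox : IsBoxAugmentation P B η)
    (C : Set P) (hC : IsChain (· ≤ ·) C)
    (s : Fin k → P) (hsC : ∀ j, s j ∈ C)
    (hdist : ∀ j j' : Fin k, j ≠ j' →
      ¬ ∀ i, SameComp (η.symm (s j) i) (η.symm (s j') i)) :
    ∃ A : ∀ i, Set (B i), (∀ i, IsAntichain (· ≤ ·) (A i)) ∧
      ∃ C' : Set P, IsChain (· ≤ ·) C' ∧ C' ⊆ η '' {f | ∀ i, f i ∈ A i} ∧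
        C'.ncard = k := by
  choose t hle hanti using fun i =>
    (hB i).exists_le_map_antichain (Set.finite_range fun j => η.symm (s j) i)
  set g : Fin k → ∀ i, B i := fun j i => t i (η.symm (s j) i)
  have hsg : ∀ j, s j ≤ η (g j) := fun j => by
    simpa using hbox.monotone_s17 fun i => hle i _ ⟨j, rfl⟩
  have hinj : Function.Injective fun j => η (g j) := by
    intro j j' hjj'
    have hg : g j = g j' := η.injective hjj'
    by_contra hne
    exact hdist j j' hne fun i => sameComp_of_le_of_le (hle i _ ⟨j, rfl⟩)
      ((hle i _ ⟨j', rfl⟩).trans_eq (congrFun hg i).symm)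
  refine ⟨fun i => t i '' Set.range fun j => η.symm (s j) i, hanti,
    Set.range fun j => η (g j), ?_, ?_, ?_⟩
  · rintro _ ⟨j, rfl⟩ _ ⟨j', rfl⟩ -
    rcases hC.total (hsC j) (hsC j') with h | h
    · exact hP.le_total_of_le_s17 (hsg j) (h.trans (hsg j'))
    · exact (hP.le_total_of_le_s17 (hsg j') (h.trans (hsg j))).symm
  · rintro _ ⟨j, rfl⟩
    exact ⟨g j, fun i => ⟨_, ⟨j, rfl⟩, rfl⟩, rfl⟩
  · rw [Set.ncard_range_of_injective hinj, Nat.card_eq_fintype_card, Fintype.card_fin]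

/-- If a wulpo `P` is a box-augmentation of wulpos `(B 0, …, B (n-1))` via `η`, and a chain
`C ⊆ P` contains elements of `k` distinct classes of the same-factor equivalence (elements
are equivalent when their preimage factors lie in the same connected components), then there
are antichains `A i ⊆ B i` and a chain `C'` of cardinality `k` with
`C' ⊆ η (A 0 × ⋯ × A (n-1))`. -/
theorem chain_of_distinct_sameFactor_classes {n k : ℕ} {P : Type u}
    [PartialOrder P] [WellFoundedLT P] (B : Fin n → Type u) [∀ i, PartialOrder (B i)]
    [∀ i, WellFoundedLT (B i)] (hP : UpwardsLinear P) (hB : ∀ i, UpwardsLinear (B i))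
    (η : (∀ i, B i) ≃ P) (hbox : IsBoxAugmentation P B η)
    (C : Set P) (hC : IsChain (· ≤ ·) C)
    (s : Fin k → P) (hsC : ∀ j, s j ∈ C)
    (hdist : ∀ j j' : Fin k, j ≠ j' →
      ¬ ∀ i, SameComp (η.symm (s j) i) (η.symm (s j') i)) :
    ∃ A : ∀ i, Set (B i), (∀ i, IsAntichain (· ≤ ·) (A i)) ∧
      ∃ C' : Set P, IsChain (· ≤ ·) C' ∧ C' ⊆ η '' {f | ∀ i, f i ∈ A i} ∧
        C'.ncard = k :=
  chain_of_distinct_sameFactor_classes_general B hP hB η hbox C hC s hsC hdist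
end

section
/- Let P be a wulpo which is a tamely colorable box-augmentation of partial orders (P₁, …, Pₙ) via the bijection η. Then there exists a constant c ∈ ℕ such that for every choice of antichains Aᵢ ⊆ Pᵢ (for 1 ≤ i ≤ n), every chain contained in η(A₁ × ⋯ × Aₙ) has fewer than c elements. -/
universe u

/-- The box-augmentation `η` is tamely colorable: there are finite colorings
`σ i : B i × B i → C i` such that the tuple of colors of the componentwise preimages
determines the order relation on `A`. -/
def TamelyColorable {n : ℕ} (A : Type u) [PartialOrder A] (B : Fin n → Type u)
    [∀ i, PartialOrder (B i)] (η : (∀ i, B i) ≃ A) : Prop :=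
  ∃ (C : Fin n → Type u) (_ : ∀ i, Finite (C i)) (σ : ∀ i, B i → B i → C i),
    ∀ b b' c c' : ∀ i, B i, (∀ i, σ i (b i) (b' i) = σ i (c i) (c' i)) →
      (η b ≤ η b' ↔ η c ≤ η c')

/-!
Fix a tame coloring `σ` with finite color sets `C i`, antichains `A i`, and any point `b`.
Points `y` of the box `η (A 0 × ⋯ × A (n-1))` strictly above `b` are determined by their colors
`(σ i (b i) (η⁻¹ y i))ᵢ`: if `k` and `l` above `b` have the same colors, then changing the `i`-th
coordinate of `k` to `l i` keeps `b` strictly below, so by upwards linearity the result is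
comparable to `k`; the box-augmentation property turns this into comparability of `l i` and
`k i`, which are therefore equal. Hence every finite chain in the box has at most `∏ |C i| + 1`
elements (its least element plus the points above it), and so every chain is finite as well.
-/

open Function

variable {n : ℕ} {P : Type u} [PartialOrder P] {B : Fin n → Type u} [∀ i, PartialOrder (B i)]
  {η : (∀ i, B i) ≃ P}

theorem IsBoxAugmentation.lt_iff (hbox : IsBoxAugmentation P B η) (k : Fin n) (d : ∀ i, B i)
    (e e' : B k) : e < e' ↔ η (update d k e) < η (update d k e') := by
  simp only [lt_iff_le_and_ne, ← hbox k d, ne_eq, η.injective.eq_iff,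
    (update_injective d k).eq_iff]

def IsTameColoring {C : Fin n → Type*} (η : (∀ i, B i) ≃ P) (σ : ∀ i, B i → B i → C i) : Prop :=
  ∀ b b' c c' : ∀ i, B i, (∀ i, σ i (b i) (b' i) = σ i (c i) (c' i)) →
    (η b ≤ η b' ↔ η c ≤ η c')

namespace IsTameColoring

variable {C : Fin n → Type*} {σ : ∀ i, B i → B i → C i} {A : ∀ i, Set (B i)}

theorem eq_of_color_eq (hσ : IsTameColoring η σ) (hP : UpwardsLinear P)
    (hbox : IsBoxAugmentation P B η) (hA : ∀ i, IsAntichain (· ≤ ·) (A i)) {b k : ∀ i, B i}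
    (hbk : η b < η k) {i : Fin n} {e : B i} (he : e ∈ A i) (hk : k i ∈ A i)
    (hcol : σ i (b i) e = σ i (b i) (k i)) : e = k i := by
  set d := update k i e with hd
  have hbd : η b ≤ η d := by
    refine (hσ b d b k fun j => ?_).2 hbk.le
    rcases eq_or_ne j i with rfl | hj
    · simpa [hd] using hcol
    · simp [hd, update_of_ne hj]
  have hbd' : η b < η d := by
    refine hbd.lt_of_ne fun hbd_eq => (hA i).not_lt he hk ?_
    rwa [hbox.lt_iff i k, update_eq_self, ← hd, ← hbd_eq]
  have hdk : e ≤ k i ↔ η d ≤ η k := by simpa using hbox i k e (k i)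
  have hkd : k i ≤ e ↔ η k ≤ η d := by simpa using hbox i k (k i) e
  rcases hP _ _ _ hbd' hbk with h | h
  · exact (hA i).eq he hk (hdk.2 h)
  · exact ((hA i).eq hk he (hkd.2 h)).symm

theorem injOn_colors_above (hσ : IsTameColoring η σ) (hP : UpwardsLinear P)
    (hbox : IsBoxAugmentation P B η) (hA : ∀ i, IsAntichain (· ≤ ·) (A i)) (b : ∀ i, B i) :
    Set.InjOn (fun y i => σ i (b i) (η.symm y i)) {y | η b < y ∧ ∀ i, η.symm y i ∈ A i} := by
  rintro y ⟨hby, hyA⟩ z ⟨-, hzA⟩ hyz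
  refine η.symm.injective (funext fun i => ?_)
  rw [← η.apply_symm_apply y] at hby
  exact (hσ.eq_of_color_eq hP hbox hA hby (hzA i) (hyA i) (congrFun hyz i).symm).symm

theorem ncard_le_of_isChain [∀ i, Finite (C i)] (hσ : IsTameColoring η σ)
    (hP : UpwardsLinear P) (hbox : IsBoxAugmentation P B η)
    (hA : ∀ i, IsAntichain (· ≤ ·) (A i)) {S : Set P} (hS : IsChain (· ≤ ·) S)
    (hSA : S ⊆ η '' {f | ∀ i, f i ∈ A i}) (hfin : S.Finite) :
    S.ncard ≤ Nat.card (∀ i, C i) + 1 := by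
  rcases S.eq_empty_or_nonempty with rfl | hne
  · simp
  obtain ⟨x, hx⟩ := hfin.exists_minimal hne
  have habove : S \ {x} ⊆ {y | η (η.symm x) < y ∧ ∀ i, η.symm y i ∈ A i} := by
    rintro y ⟨hy, hyx⟩
    refine ⟨?_, ?_⟩
    · rw [η.apply_symm_apply]
      refine lt_of_le_of_ne ?_ (Ne.symm hyx)
      rcases hS.total hx.prop hy with h | h
      · exact h
      · exact hx.le_of_le hy h
    · obtain ⟨f, hf, rfl⟩ := hSA hy
      simpa using hf
  calc S.ncard = (S \ {x}).ncard + 1 := (Set.ncard_sdiff_singleton_add_one hx.prop hfin).symm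
    _ ≤ Nat.card (∀ i, C i) + 1 := by
      gcongr
      rw [← ((hσ.injOn_colors_above hP hbox hA _).mono habove).ncard_image]
      exact Set.ncard_le_card _

end IsTameColoring

theorem tamelyColorable_bound_chain_length_general {n : ℕ} {P : Type u} [PartialOrder P]
    (B : Fin n → Type u) [∀ i, PartialOrder (B i)]
    (hP : UpwardsLinear P)
    (η : (∀ i, B i) ≃ P) (hbox : IsBoxAugmentation P B η)
    (htame : TamelyColorable P B η) :
    ∃ c : ℕ, ∀ A : ∀ i, Set (B i), (∀ i, IsAntichain (· ≤ ·) (A i)) →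
      ∀ L : Set P, IsChain (· ≤ ·) L → L ⊆ η '' {f | ∀ i, f i ∈ A i} →
        L.Finite ∧ L.ncard < c := by
  obtain ⟨C, _, σ, hσ⟩ := htame
  refine ⟨Nat.card (∀ i, C i) + 2, fun A hA L hL hLA => ?_⟩
  have hbound : ∀ S ⊆ L, S.Finite → S.ncard ≤ Nat.card (∀ i, C i) + 1 := fun S hSL hS =>
    IsTameColoring.ncard_le_of_isChain hσ hP hbox hA (hL.mono hSL) (hSL.trans hLA) hS
  have hfin : L.Finite := by
    by_contra hinf
    obtain ⟨S, hSL, hS, hcard⟩ := Set.Infinite.exists_subset_ncard_eq hinf (Nat.card (∀ i, C i) + 2)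
    have := hbound S hSL hS
    omega
  exact ⟨hfin, Nat.lt_succ_of_le (hbound L subset_rfl hfin)⟩

/-- If a wulpo `P` is a tamely colorable box-augmentation of `(B 0, …, B (n-1))` via `η`,
then there is a constant `c` such that for all antichains `A i ⊆ B i`, every chain contained
in `η (A 0 × ⋯ × A (n-1))` has fewer than `c` elements. -/
theorem tamelyColorable_bound_chain_length {n : ℕ} {P : Type u} [PartialOrder P]
    [WellFoundedLT P] (B : Fin n → Type u) [∀ i, PartialOrder (B i)]
    (hP : UpwardsLinear P)
    (η : (∀ i, B i) ≃ P) (hbox : IsBoxAugmentation P B η)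
    (htame : TamelyColorable P B η) :
    ∃ c : ℕ, ∀ A : ∀ i, Set (B i), (∀ i, IsAntichain (· ≤ ·) (A i)) →
      ∀ L : Set P, IsChain (· ≤ ·) L → L ⊆ η '' {f | ∀ i, f i ∈ A i} →
        L.Finite ∧ L.ncard < c :=
  tamelyColorable_bound_chain_length_general B hP η hbox htame
end
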